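/- arXiv:1911.07154 — 6 statements merged into one kernel-verified Lean document; each statement's English description precedes it below -/
import Mathlib

section
/- There are absolute constants c₁, c₂ > 0 such that for every finite pseudometric space (V,d) with |V| = n ≥ 2 and every real W > 0, there exists a collection 𝒞 of subsets of V satisfying: (i) every point of V belongs to at most c₁·log n members of 𝒞; (ii) for every u ∈ V there exists a cluster C ∈ 𝒞 containing the closed ball B(u,W) = {x ∈ V : d(u,x) ≤ W}; (iii) every C ∈ 𝒞 has diameter at most c₂·W·log n, i.e., d(x,y) ≤ c₂·W·log n for all x,y ∈ C. -/
open scoped Classical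


open Finset
set_option linter.unusedSectionVars false

section NC
variable {V : Type} [Fintype V] [PseudoMetricSpace V]

/-- ball as a finset, radius `k*W` around `u`. -/
noncomputable def bF (W : ℝ) (u : V) (k : ℕ) : Finset V :=
  Finset.univ.filter (fun x => dist u x ≤ (k : ℝ) * W)

lemma mem_bF {W : ℝ} {u x : V} {k : ℕ} : x ∈ bF W u k ↔ dist u x ≤ (k : ℝ) * W := by
  simp [bF]

lemma bF_mono {W : ℝ} (hW : 0 ≤ W) {u : V} {k k' : ℕ} (h : k ≤ k') :
    bF W u k ⊆ bF W u k' := by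
  intro x hx
  rw [mem_bF] at *
  exact hx.trans (mul_le_mul_of_nonneg_right (Nat.cast_le.mpr h) hW)

lemma self_mem_bF {W : ℝ} (hW : 0 ≤ W) (u : V) (k : ℕ) : u ∈ bF W u k := by
  rw [mem_bF, dist_self]
  positivity

/-- the stopping predicate for ball growing. -/
def Pr (W : ℝ) (u : V) (M : Finset V) (k : ℕ) : Prop :=
  4 * ((bF W u (k+2)) ∩ M).card < 5 * ((bF W u k) ∩ M).card

/-- abbreviation for the scale bound -/
noncomputable def sB (V : Type) [Fintype V] : ℕ := Nat.clog 2 (Fintype.card V) + 1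

lemma card_lt_two_pow_sB (hc : 0 < Fintype.card V) : Fintype.card V < 2 ^ sB V := by
  have h1 : Fintype.card V ≤ 2 ^ Nat.clog 2 (Fintype.card V) := Nat.le_pow_clog one_lt_two _
  have : 2 ^ sB V = 2 * 2 ^ Nat.clog 2 (Fintype.card V) := by
    rw [sB, pow_succ]; ring
  omega

lemma exP (W : ℝ) (u : V) (M : Finset V) (hu : u ∈ M) :
    ∃ k, k < 8 * sB V ∧ Pr W u M k := by
  by_contra hc
  push_neg at hc
  have key : ∀ i ≤ 4 * sB V,
      5 ^ i * ((bF W u 0) ∩ M).card ≤ 4 ^ i * ((bF W u (2*i)) ∩ M).card := by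
    intro i hi
    induction i with
    | zero => simp
    | succ i ih =>
      have h1 := ih (by omega)
      have h2 : ¬ Pr W u M (2*i) := hc (2*i) (by omega)
      rw [Pr, not_lt] at h2
      calc 5 ^ (i+1) * ((bF W u 0) ∩ M).card
          = 5 * (5 ^ i * ((bF W u 0) ∩ M).card) := by ring
        _ ≤ 5 * (4 ^ i * ((bF W u (2*i)) ∩ M).card) := by
            exact Nat.mul_le_mul_left _ h1
        _ = 4 ^ i * (5 * ((bF W u (2*i)) ∩ M).card) := by ring
        _ ≤ 4 ^ i * (4 * ((bF W u (2*i+2)) ∩ M).card) := Nat.mul_le_mul_left _ h2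
        _ = 4 ^ (i+1) * ((bF W u (2*(i+1))) ∩ M).card := by ring_nf
  have h0 : 1 ≤ ((bF W u 0) ∩ M).card := by
    have : u ∈ (bF W u 0) ∩ M := by
      refine mem_inter.mpr ⟨?_, hu⟩
      rw [mem_bF, dist_self]
      simp
    exact card_pos.mpr ⟨u, this⟩ 
  have hle := key (4 * sB V) le_rfl
  have hn : ((bF W u (2*(4 * sB V))) ∩ M).card ≤ Fintype.card V := by
    simpa using card_le_univ _
  have h5 : 5 ^ (4 * sB V) ≤ 4 ^ (4 * sB V) * Fintype.card V := by
    calc 5 ^ (4 * sB V) = 5 ^ (4 * sB V) * 1 := by ring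
      _ ≤ 5 ^ (4 * sB V) * ((bF W u 0) ∩ M).card := Nat.mul_le_mul_left _ h0
      _ ≤ 4 ^ (4 * sB V) * ((bF W u (2*(4 * sB V))) ∩ M).card := hle
      _ ≤ 4 ^ (4 * sB V) * Fintype.card V := Nat.mul_le_mul_left _ hn
  have hcard : Fintype.card V < 2 ^ sB V :=
    card_lt_two_pow_sB (Fintype.card_pos_iff.mpr ⟨u⟩)
  have h625 : (625 : ℕ) ^ sB V ≤ 512 ^ sB V := by
    have e1 : (5:ℕ) ^ (4 * sB V) = 625 ^ sB V := by
      rw [pow_mul]; norm_num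
    have e2 : (4:ℕ) ^ (4 * sB V) = 256 ^ sB V := by
      rw [pow_mul]; norm_num
    have : 4 ^ (4 * sB V) * Fintype.card V < 256 ^ sB V * 2 ^ sB V := by
      rw [e2]
      exact mul_lt_mul_of_pos_left hcard (by positivity)
    have e3 : (256:ℕ) ^ sB V * 2 ^ sB V = 512 ^ sB V := by
      rw [← mul_pow]; norm_num
    omega
  have hs : 0 < sB V := by rw [sB]; omega
  have : (512:ℕ) ^ sB V < 625 ^ sB V :=
    Nat.pow_lt_pow_left (by norm_num) (by omega)
  omega

noncomputable def kc (W : ℝ) (u : V) (M : Finset V) (hu : u ∈ M) : ℕ :=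
  Nat.find ((exP W u M hu).imp (fun _ h => h.2))

lemma kc_lt (W : ℝ) (u : V) (M : Finset V) (hu : u ∈ M) : kc W u M hu < 8 * sB V := by
  obtain ⟨k, hk, hp⟩ := exP W u M hu
  exact lt_of_le_of_lt (Nat.find_min' _ hp) hk

lemma kc_spec (W : ℝ) (u : V) (M : Finset V) (hu : u ∈ M) : Pr W u M (kc W u M hu) :=
  Nat.find_spec _

/-- the cluster carved out of `S` (demand set `D`). -/
noncomputable def cl (W : ℝ) (D S : Finset V) (h : (D ∩ S).Nonempty) : Finset V :=
  bF W h.choose (kc W h.choose (D ∩ S) h.choose_spec + 1) ∩ S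

lemma cl_subset (W : ℝ) (D S : Finset V) (h : (D ∩ S).Nonempty) : cl W D S h ⊆ S :=
  inter_subset_right

lemma choose_mem_cl {W : ℝ} (hW : 0 ≤ W) (D S : Finset V) (h : (D ∩ S).Nonempty) :
    h.choose ∈ cl W D S h := by
  refine mem_inter.mpr ⟨self_mem_bF hW _ _, (mem_inter.mp h.choose_spec).2⟩

lemma sdiff_cl_ssubset {W : ℝ} (hW : 0 ≤ W) (D S : Finset V) (h : (D ∩ S).Nonempty) :
    S \ cl W D S h ⊂ S :=
  Finset.sdiff_ssubset (cl_subset W D S h) ⟨_, choose_mem_cl hW D S h⟩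

/-- the carving process: repeatedly carve clusters until no demand point remains. -/
noncomputable def carve (W : ℝ) (hW : 0 ≤ W) (D : Finset V) (S : Finset V) :
    Finset (Finset V) :=
  if h : (D ∩ S).Nonempty then
    insert (cl W D S h) (carve W hW D (S \ cl W D S h))
  else ∅
termination_by S.card
decreasing_by exact card_lt_card (sdiff_cl_ssubset hW D S h)

lemma carve_subset (W : ℝ) (hW : 0 ≤ W) (D : Finset V) :
    ∀ S : Finset V, ∀ C ∈ carve W hW D S, C ⊆ S := by
  intro S
  induction S using Finset.strongInduction with
  | _ S ih =>
    intro C hC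
    rw [carve] at hC
    split_ifs at hC with h
    · rcases mem_insert.mp hC with rfl | hC'
      · exact cl_subset W D S h
      · exact (ih _ (sdiff_cl_ssubset hW D S h) C hC').trans sdiff_subset
    · simp at hC

lemma carve_unique (W : ℝ) (hW : 0 ≤ W) (D : Finset V) :
    ∀ S : Finset V, ∀ C₁ ∈ carve W hW D S, ∀ C₂ ∈ carve W hW D S,
      ∀ x : V, x ∈ C₁ → x ∈ C₂ → C₁ = C₂ := by
  intro S
  induction S using Finset.strongInduction with
  | _ S ih =>
    intro C₁ h₁ C₂ h₂ x hx₁ hx₂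
    rw [carve] at h₁ h₂
    split_ifs at h₁ h₂ with h
    · rcases mem_insert.mp h₁ with rfl | h₁' <;> rcases mem_insert.mp h₂ with rfl | h₂'
      · rfl
      · exact absurd hx₁ (fun hx =>
          (mem_sdiff.mp (carve_subset W hW D _ _ h₂' hx₂)).2 hx)
      · exact absurd hx₂ (fun hx =>
          (mem_sdiff.mp (carve_subset W hW D _ _ h₁' hx₁)).2 hx)
      · exact ih _ (sdiff_cl_ssubset hW D S h) C₁ h₁' C₂ h₂' x hx₁ hx₂
    · simp at h₁

lemma carve_diam (W : ℝ) (hW : 0 ≤ W) (D : Finset V) :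
    ∀ S : Finset V, ∀ C ∈ carve W hW D S,
      ∃ u : V, ∃ k : ℕ, k + 1 ≤ 8 * sB V ∧ C ⊆ bF W u (k+1) := by
  intro S
  induction S using Finset.strongInduction with
  | _ S ih =>
    intro C hC
    rw [carve] at hC
    split_ifs at hC with h
    · rcases mem_insert.mp hC with rfl | hC'
      · exact ⟨h.choose, kc W h.choose (D ∩ S) h.choose_spec,
          kc_lt W h.choose (D ∩ S) h.choose_spec, inter_subset_left⟩
      · exact ih _ (sdiff_cl_ssubset hW D S h) C hC'
    · simp at hC

lemma carve_eq_of_nonempty (W : ℝ) (hW : 0 ≤ W) (D S : Finset V) (h : (D ∩ S).Nonempty) :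
    carve W hW D S = insert (cl W D S h) (carve W hW D (S \ cl W D S h)) := by
  conv_lhs => rw [carve]
  rw [dif_pos h]

lemma carve_pad (W : ℝ) (hW : 0 ≤ W) (D : Finset V) :
    ∀ S : Finset V,
      5 * ((D ∩ S).filter (fun x => bF W x 1 ⊆ S ∧
          ¬ ∃ C ∈ carve W hW D S, bF W x 1 ⊆ C)).card
        ≤ 2 * (D ∩ S).card := by
  intro S
  induction S using Finset.strongInduction with
  | _ S ih =>
    by_cases h : (D ∩ S).Nonempty
    · set u := h.choose with hu
      set k := kc W u (D ∩ S) h.choose_spec with hk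
      have hcl : cl W D S h = bF W u (k+1) ∩ S := rfl
      set C := cl W D S h with hC
      set S' := S \ C with hS'
      have heq : carve W hW D S = insert C (carve W hW D S') :=
        carve_eq_of_nonempty W hW D S h
      set M := D ∩ S with hM
      set A := (bF W u (k+1) ∩ M) \ (bF W u k ∩ M) with hA
      set B := (bF W u (k+2) ∩ M) \ (bF W u (k+1) ∩ M) with hB
      set US := M.filter (fun x => bF W x 1 ⊆ S ∧
          ¬ ∃ C' ∈ carve W hW D S, bF W x 1 ⊆ C') with hUS
      set US' := (D ∩ S').filter (fun x => bF W x 1 ⊆ S' ∧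
          ¬ ∃ C' ∈ carve W hW D S', bF W x 1 ⊆ C') with hUS'
      have hsub : US ⊆ A ∪ B ∪ US' := by
        intro x hx
        obtain ⟨hxM, hball, hnp⟩ := mem_filter.mp hx
        rw [heq] at hnp
        have hxD : x ∈ D := (mem_inter.mp hxM).1
        have hxS : x ∈ S := (mem_inter.mp hxM).2
        by_cases hxC : x ∈ C
        · have hxb : x ∈ bF W u (k+1) := (mem_inter.mp (hcl ▸ hxC)).1
          by_cases hxk : x ∈ bF W u k
          · exfalso
            apply hnp
            refine ⟨C, mem_insert_self _ _, ?_⟩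
            intro y hy
            rw [hcl]
            refine mem_inter.mpr ⟨?_, hball hy⟩
            rw [mem_bF] at hxk hy ⊢
            have := dist_triangle u x y
            push_cast
            push_cast at hxk hy
            linarith
          · refine mem_union_left _ (mem_union_left _ ?_)
            rw [hA, mem_sdiff]
            exact ⟨mem_inter.mpr ⟨hxb, hxM⟩, fun hc => hxk (mem_inter.mp hc).1⟩
        · by_cases hcut : ∃ y ∈ bF W x 1, y ∈ C
          · obtain ⟨y, hy1, hyC⟩ := hcut
            have hyb : y ∈ bF W u (k+1) := (mem_inter.mp (hcl ▸ hyC)).1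
            refine mem_union_left _ (mem_union_right _ ?_)
            rw [hB, mem_sdiff]
            constructor
            · refine mem_inter.mpr ⟨?_, hxM⟩
              rw [mem_bF] at hy1 hyb ⊢
              have h1 := dist_triangle u y x
              have h2 : dist y x = dist x y := dist_comm y x
              push_cast
              push_cast at hyb hy1
              linarith
            · intro hc
              exact hxC (hcl ▸ mem_inter.mpr ⟨(mem_inter.mp hc).1, hxS⟩)
          · refine mem_union_right _ ?_
            rw [hUS', mem_filter]
            refine ⟨mem_inter.mpr ⟨hxD, mem_sdiff.mpr ⟨hxS, hxC⟩⟩, ?_, ?_⟩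
            · intro y hy
              exact mem_sdiff.mpr ⟨hball hy, fun hyC => hcut ⟨y, hy, hyC⟩⟩
            · intro ⟨C', hC', hsub'⟩
              exact hnp ⟨C', mem_insert_of_mem hC', hsub'⟩
      have hmono1 : (bF W u k ∩ M) ⊆ (bF W u (k+1) ∩ M) :=
        inter_subset_inter (bF_mono hW (by omega)) le_rfl
      have hmono2 : (bF W u (k+1) ∩ M) ⊆ (bF W u (k+2) ∩ M) :=
        inter_subset_inter (bF_mono hW (by omega)) le_rfl
      have hcardA : A.card + (bF W u k ∩ M).card = (bF W u (k+1) ∩ M).card :=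
        card_sdiff_add_card_eq_card hmono1
      have hcardB : B.card + (bF W u (k+1) ∩ M).card = (bF W u (k+2) ∩ M).card :=
        card_sdiff_add_card_eq_card hmono2
      have hDS' : D ∩ S' = M \ C := by
        rw [hS', hM]
        ext x
        simp only [mem_inter, mem_sdiff]
        tauto
      have hMC : M ∩ C = bF W u (k+1) ∩ M := by
        rw [hcl, hM]
        ext x
        simp only [mem_inter]
        tauto
      have hcardM : (D ∩ S').card + (bF W u (k+1) ∩ M).card = M.card := by
        rw [hDS', ← hMC]
        exact card_sdiff_add_card_inter M C
      have hP : 4 * (bF W u (k+2) ∩ M).card < 5 * (bF W u k ∩ M).card :=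
        kc_spec W u (D ∩ S) h.choose_spec
      have hIH : 5 * US'.card ≤ 2 * (D ∩ S').card :=
        ih S' (sdiff_cl_ssubset hW D S h)
      have hUScard : US.card ≤ A.card + B.card + US'.card := by
        calc US.card ≤ (A ∪ B ∪ US').card := card_le_card hsub
          _ ≤ (A ∪ B).card + US'.card := card_union_le _ _
          _ ≤ A.card + B.card + US'.card := by
              have := card_union_le A B
              omega
      omega
    · have hempty : D ∩ S = ∅ := not_nonempty_iff_eq_empty.mp h
      simp [hempty]

noncomputable def Dseq (W : ℝ) (hW : 0 ≤ W) : ℕ → Finset V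
  | 0 => Finset.univ
  | j+1 => (Dseq W hW j).filter
      (fun x => ¬ ∃ C ∈ carve W hW (Dseq W hW j) Finset.univ, bF W x 1 ⊆ C)

lemma Dseq_step (W : ℝ) (hW : 0 ≤ W) (j : ℕ) :
    5 * (Dseq (V := V) W hW (j+1)).card ≤ 2 * (Dseq (V := V) W hW j).card := by
  have h := carve_pad W hW (Dseq (V := V) W hW j) Finset.univ
  rw [inter_univ] at h
  calc 5 * (Dseq (V := V) W hW (j+1)).card
      = 5 * ((Dseq (V := V) W hW j).filter (fun x => bF W x 1 ⊆ Finset.univ ∧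
          ¬ ∃ C ∈ carve W hW (Dseq (V := V) W hW j) Finset.univ, bF W x 1 ⊆ C)).card := by
        congr 1
        refine congrArg card ?_
        rw [Dseq]
        exact (filter_congr (fun x _ => by simp [subset_univ])).symm
    _ ≤ 2 * (Dseq (V := V) W hW j).card := h

lemma Dseq_card (W : ℝ) (hW : 0 ≤ W) (j : ℕ) :
    (Dseq (V := V) W hW j).card * 5 ^ j ≤ Fintype.card V * 2 ^ j := by
  induction j with
  | zero => simpa using card_le_univ _
  | succ j ih =>
    have hstep := Dseq_step (V := V) W hW j
    calc (Dseq (V := V) W hW (j+1)).card * 5 ^ (j+1)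
        = (5 * (Dseq (V := V) W hW (j+1)).card) * 5 ^ j := by ring
      _ ≤ (2 * (Dseq (V := V) W hW j).card) * 5 ^ j := Nat.mul_le_mul_right _ hstep
      _ = 2 * ((Dseq (V := V) W hW j).card * 5 ^ j) := by ring
      _ ≤ 2 * (Fintype.card V * 2 ^ j) := Nat.mul_le_mul_left _ ih
      _ = Fintype.card V * 2 ^ (j+1) := by ring

lemma Dseq_empty (W : ℝ) (hW : 0 ≤ W) (hn : 0 < Fintype.card V) :
    Dseq (V := V) W hW (sB V) = ∅ := by
  by_contra hne
  have hpos : 1 ≤ (Dseq (V := V) W hW (sB V)).card :=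
    card_pos.mpr (nonempty_iff_ne_empty.mpr hne)
  have h1 := Dseq_card (V := V) W hW (sB V)
  have h2 : Fintype.card V < 2 ^ sB V := card_lt_two_pow_sB hn
  have h3 : Fintype.card V * 2 ^ sB V < 2 ^ sB V * 2 ^ sB V :=
    Nat.mul_lt_mul_of_lt_of_le h2 le_rfl (by positivity)
  have h4 : 2 ^ sB V * 2 ^ sB V = 4 ^ sB V := by
    rw [show (4:ℕ) = 2 * 2 from rfl, mul_pow]
  have h5 : (4:ℕ) ^ sB V < 5 ^ sB V := by
    refine Nat.pow_lt_pow_left (by norm_num) ?_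
    rw [sB]; omega
  have h6 : 5 ^ sB V ≤ (Dseq (V := V) W hW (sB V)).card * 5 ^ sB V :=
    Nat.le_mul_of_pos_left _ hpos
  omega

lemma exists_round (W : ℝ) (hW : 0 ≤ W) (hn : 0 < Fintype.card V) (x : V) :
    ∃ j < sB V, ∃ C ∈ carve W hW (Dseq (V := V) W hW j) Finset.univ, bF W x 1 ⊆ C := by
  have hlast : x ∉ Dseq (V := V) W hW (sB V) := by
    rw [Dseq_empty W hW hn]; exact notMem_empty x
  by_contra hc
  push_neg at hc
  have hall : ∀ j ≤ sB V, x ∈ Dseq (V := V) W hW j := by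
    intro j hj
    induction j with
    | zero => exact mem_univ x
    | succ j ih =>
      have hxj : x ∈ Dseq (V := V) W hW j := ih (by omega)
      rw [Dseq, mem_filter]
      refine ⟨hxj, ?_⟩
      intro ⟨C, hC, hsub⟩
      exact (hc j (by omega) C hC) hsub
  exact hlast (hall _ le_rfl)

end NC

lemma clog_real_bound (n : ℕ) (hn : 2 ≤ n) :
    ((Nat.clog 2 n : ℝ) + 1) ≤ 6 * Real.log n := by
  have hclog : 0 < Nat.clog 2 n := Nat.clog_pos one_lt_two hn
  set m := Nat.clog 2 n - 1 with hm
  have hpow : 2 ^ m < n := Nat.pow_pred_clog_lt_self one_lt_two (by omega)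
  have hpowR : (2:ℝ) ^ m ≤ (n:ℝ) := by exact_mod_cast hpow.le
  have hlog1 : (m:ℝ) * Real.log 2 ≤ Real.log n := by
    rw [← Real.log_pow]
    exact Real.log_le_log (by positivity) hpowR
  have hlog2 : Real.log 2 ≤ Real.log n :=
    Real.log_le_log (by norm_num) (by exact_mod_cast hn)
  have hl2 : (0.6931471803 : ℝ) < Real.log 2 := Real.log_two_gt_d9
  have hmc : (Nat.clog 2 n : ℝ) = (m : ℝ) + 1 := by
    have : Nat.clog 2 n = m + 1 := by omega
    rw [this]; push_cast; ring
  have hm0 : (0:ℝ) ≤ (m:ℝ) := Nat.cast_nonneg m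
  rw [hmc]
  nlinarith

theorem neighborhood_cover_exists_aux :
    ∃ c₁ c₂ : ℝ, 0 < c₁ ∧ 0 < c₂ ∧
      ∀ (V : Type) [Fintype V] [PseudoMetricSpace V],
        2 ≤ Fintype.card V →
        ∀ W : ℝ, 0 < W →
        ∃ 𝒞 : Finset (Set V),
          (∀ u : V,
            ((𝒞.filter fun C => u ∈ C).card : ℝ) ≤ c₁ * Real.log (Fintype.card V)) ∧
          (∀ u : V, ∃ C ∈ 𝒞, Metric.closedBall u W ⊆ C) ∧
          (∀ C ∈ 𝒞, ∀ x ∈ C, ∀ y ∈ C,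
            dist x y ≤ c₂ * W * Real.log (Fintype.card V)) := by
  classical
  refine ⟨6, 96, by norm_num, by norm_num, ?_⟩
  intro V _ _ hcard W hW
  have hW0 : (0:ℝ) ≤ W := hW.le
  have hn : 0 < Fintype.card V := by omega
  have hsle : (sB V : ℝ) ≤ 6 * Real.log (Fintype.card V) := by
    have h := clog_real_bound (Fintype.card V) hcard
    rw [sB]
    push_cast
    exact h
  set 𝒞 := (Finset.range (sB V)).biUnion
      (fun j => (carve W hW0 (Dseq (V := V) W hW0 j) Finset.univ).image
        (fun C : Finset V => (C : Set V))) with h𝒞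
  refine ⟨𝒞, ?_, ?_, ?_⟩
  · intro x
    have hone : ∀ j, (((carve W hW0 (Dseq (V := V) W hW0 j) Finset.univ).image
        (fun C : Finset V => (C : Set V))).filter (fun C => x ∈ C)).card ≤ 1 := by
      intro j
      refine Finset.card_le_one.mpr ?_
      intro a ha b hb
      obtain ⟨haI, hxa⟩ := Finset.mem_filter.mp ha
      obtain ⟨C1, hC1, rfl⟩ := Finset.mem_image.mp haI
      obtain ⟨hbI, hxb⟩ := Finset.mem_filter.mp hb
      obtain ⟨C2, hC2, rfl⟩ := Finset.mem_image.mp hbI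
      have heq := carve_unique W hW0 _ Finset.univ C1 hC1 C2 hC2 x
        (Finset.mem_coe.mp hxa) (Finset.mem_coe.mp hxb)
      rw [heq]
    have hcount : (𝒞.filter (fun C => x ∈ C)).card ≤ sB V := by
      rw [h𝒞, Finset.filter_biUnion]
      calc ((Finset.range (sB V)).biUnion fun j =>
              (((carve W hW0 (Dseq (V := V) W hW0 j) Finset.univ).image
                (fun C : Finset V => (C : Set V))).filter (fun C => x ∈ C))).card
          ≤ ∑ j ∈ Finset.range (sB V),
              (((carve W hW0 (Dseq (V := V) W hW0 j) Finset.univ).image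
                (fun C : Finset V => (C : Set V))).filter (fun C => x ∈ C)).card :=
            Finset.card_biUnion_le
        _ ≤ ∑ _j ∈ Finset.range (sB V), 1 :=
            Finset.sum_le_sum (fun j _ => hone j)
        _ = sB V := by simp
    calc ((𝒞.filter (fun C => x ∈ C)).card : ℝ) ≤ (sB V : ℝ) := by exact_mod_cast hcount
      _ ≤ 6 * Real.log (Fintype.card V) := hsle
  · intro x
    obtain ⟨j, hj, C, hC, hsub⟩ := exists_round W hW0 hn x
    refine ⟨↑C, ?_, ?_⟩
    · rw [h𝒞]
      exact Finset.mem_biUnion.mpr ⟨j, Finset.mem_range.mpr hj,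
        Finset.mem_image_of_mem _ hC⟩
    · intro y hy
      have hyb : y ∈ bF W x 1 := by
        rw [mem_bF]
        have h1 : dist y x ≤ W := Metric.mem_closedBall.mp hy
        rw [dist_comm]
        push_cast
        linarith
      exact Finset.mem_coe.mpr (hsub hyb)
  · intro Cs hCs x hx y hy
    rw [h𝒞] at hCs
    obtain ⟨j, hj, hCj⟩ := Finset.mem_biUnion.mp hCs
    obtain ⟨C, hC, rfl⟩ := Finset.mem_image.mp hCj
    obtain ⟨u, k, hk, hsub⟩ := carve_diam W hW0 _ Finset.univ C hC
    have hxC : x ∈ C := Finset.mem_coe.mp hx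
    have hyC : y ∈ C := Finset.mem_coe.mp hy
    have h1 : dist u x ≤ ((k:ℝ)+1) * W := by
      have := mem_bF.mp (hsub hxC); push_cast at this; exact this
    have h2 : dist u y ≤ ((k:ℝ)+1) * W := by
      have := mem_bF.mp (hsub hyC); push_cast at this; exact this
    have htri : dist x y ≤ dist u x + dist u y := by
      rw [dist_comm u x] at *
      exact dist_triangle x u y
    have hkR : ((k:ℝ)+1) ≤ 8 * (sB V : ℝ) := by
      have : ((k+1 : ℕ) : ℝ) ≤ ((8 * sB V : ℕ) : ℝ) := Nat.cast_le.mpr hk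
      push_cast at this
      linarith
    have hfin : dist x y ≤ 16 * (sB V : ℝ) * W := by
      nlinarith
    calc dist x y ≤ 16 * (sB V : ℝ) * W := hfin
      _ ≤ 96 * W * Real.log (Fintype.card V) := by nlinarith

/-- There are absolute constants `c₁, c₂ > 0` such that for every finite
pseudometric space `(V, d)` with `|V| = n ≥ 2` and every real `W > 0`, there is a collection
`𝒞` of subsets of `V` such that: (i) every point lies in at most `c₁·log n` members of `𝒞`;
(ii) for every `u` some `C ∈ 𝒞` contains the closed ball `B(u, W)`; (iii) every `C ∈ 𝒞` has
diameter at most `c₂·W·log n`. -/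
theorem neighborhood_cover_exists :
    ∃ c₁ c₂ : ℝ, 0 < c₁ ∧ 0 < c₂ ∧
      ∀ (V : Type) [Fintype V] [PseudoMetricSpace V],
        2 ≤ Fintype.card V →
        ∀ W : ℝ, 0 < W →
        ∃ 𝒞 : Finset (Set V),
          (∀ u : V,
            ((𝒞.filter fun C => u ∈ C).card : ℝ) ≤ c₁ * Real.log (Fintype.card V)) ∧
          (∀ u : V, ∃ C ∈ 𝒞, Metric.closedBall u W ⊆ C) ∧
          (∀ C ∈ 𝒞, ∀ x ∈ C, ∀ y ∈ C,
            dist x y ≤ c₂ * W * Real.log (Fintype.card V)) := by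
  exact neighborhood_cover_exists_aux
end

section
/- Let G = (V,E,w) be a connected finite weighted graph with positive edge weights, and let G' = (V, E ∪ H, w') be a graph on the same vertex set such that every edge of G is an edge of G' with the same weight, and every edge {x,y} of G' has weight w'({x,y}) ≥ d_G(x,y). Let κ be an integer, β ≥ 1 an integer, and ε > 0. Suppose that for every pair u,v ∈ V with d_G(u,v) ≤ 2^κ we have d^β_{G'}(u,v) ≤ (1+ε)·d_G(u,v). Then for every pair u,v ∈ V with 2^κ < d_G(u,v) ≤ 2^{κ+1} we have d^{2β+1}_{G'}(u,v) ≤ (1+ε)·d_G(u,v). -/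
open scoped ENNReal

namespace Stmt2

variable {V : Type*}

/-- The weight of a walk: sum of the weights of its edges (with multiplicity). -/
noncomputable def walkWeight (w : V → V → ℝ) {G : SimpleGraph V} {u v : V}
    (p : G.Walk u v) : ℝ :=
  (p.darts.map fun d => w d.toProd.1 d.toProd.2).sum

/-- Shortest-path distance: infimum of weights of walks from `u` to `v` (`∞` if none). -/
noncomputable def gdist (G : SimpleGraph V) (w : V → V → ℝ) (u v : V) : ℝ≥0∞ :=
  ⨅ (p : G.Walk u v), ENNReal.ofReal (walkWeight w p)

/-- `β`-hop-limited distance: infimum of weights of walks from `u` to `v`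
using at most `β` edges (`∞` if none). -/
noncomputable def hopDist (G : SimpleGraph V) (w : V → V → ℝ) (β : ℕ) (u v : V) : ℝ≥0∞ :=
  ⨅ (p : G.Walk u v) (_ : p.length ≤ β), ENNReal.ofReal (walkWeight w p)

/-! Take a shortest `G`-walk from `u` to `v` (on a finite graph the infimum over walks is attained
by a path) and cut it at the edge `m m'` where its running weight passes half the total.
Both halves have weight at most `d_G(u,v)/2 ≤ 2^κ`, so each is `(1+ε)`-approximated by a
`β`-hop walk of `G'`; joining these through the single edge `m m'`, which `G'` contains with the
same weight, gives a walk of at most `2β+1` hops and weight at most `(1+ε) d_G(u,v)`. -/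

open SimpleGraph

section WalkWeight

variable {G : SimpleGraph V} {w : V → V → ℝ}

@[simp]
lemma walkWeight_nil {u : V} : walkWeight w (Walk.nil : G.Walk u u) = 0 := by
  simp [walkWeight]

@[simp]
lemma walkWeight_cons {u x v : V} (h : G.Adj u x) (q : G.Walk x v) :
    walkWeight w (Walk.cons h q) = w u x + walkWeight w q := by
  simp [walkWeight]

lemma walkWeight_append {u x v : V} (p : G.Walk u x) (q : G.Walk x v) :
    walkWeight w (p.append q) = walkWeight w p + walkWeight w q := by
  simp [walkWeight, Walk.darts_append]

lemma walkWeight_nonneg (hw : ∀ x y, G.Adj x y → 0 ≤ w x y) {u v : V} (p : G.Walk u v) :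
    0 ≤ walkWeight w p :=
  List.sum_nonneg <| by
    simp only [List.mem_map]
    rintro _ ⟨d, -, rfl⟩
    exact hw _ _ d.adj

lemma walkWeight_bypass_le [DecidableEq V] (hw : ∀ x y, G.Adj x y → 0 ≤ w x y) {u v : V}
    (p : G.Walk u v) : walkWeight w p.bypass ≤ walkWeight w p := by
  have hnodup : p.bypass.darts.Nodup :=
    Walk.darts_nodup_of_support_nodup p.bypass_isPath.support_nodup
  obtain ⟨l, hperm, hsub⟩ := List.subperm_of_subset hnodup p.darts_bypass_subset_darts
  rw [walkWeight, ← (hperm.map _).sum_eq]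
  refine (hsub.map _).sum_le_sum ?_
  simp only [List.mem_map]
  rintro _ ⟨d, -, rfl⟩
  exact hw _ _ d.adj

lemma exists_split_at_weight {u v : V} (p : G.Walk u v) (t : ℝ) (ht : 0 ≤ t)
    (htp : t < walkWeight w p) :
    ∃ (m m' : V) (_ : G.Adj m m') (p₁ : G.Walk u m) (p₂ : G.Walk m' v),
      walkWeight w p₁ + w m m' + walkWeight w p₂ = walkWeight w p ∧
      walkWeight w p₁ ≤ t ∧ walkWeight w p₂ ≤ walkWeight w p - t := by
  induction p generalizing t with
  | nil => simp at htp; linarith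
  | @cons a c v h q ih =>
    rw [walkWeight_cons] at htp ⊢
    by_cases hc : t < w a c
    · exact ⟨a, c, h, Walk.nil, q, by simp, by simpa using ht, by linarith⟩
    · obtain ⟨m, m', hmm', q₁, q₂, hsum, h₁, h₂⟩ :=
        ih (t - w a c) (by linarith) (by linarith)
      refine ⟨m, m', hmm', Walk.cons h q₁, q₂, ?_, ?_, by linarith⟩ <;>
        rw [walkWeight_cons] <;> linarith

end WalkWeight

section Distances

variable {G : SimpleGraph V} {w : V → V → ℝ}

lemma gdist_le_walkWeight {u v : V} (p : G.Walk u v) :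
    gdist G w u v ≤ ENNReal.ofReal (walkWeight w p) :=
  iInf_le (fun q : G.Walk u v => ENNReal.ofReal (walkWeight w q)) p

lemma reachable_of_gdist_ne_top {u v : V} (h : gdist G w u v ≠ ⊤) : G.Reachable u v := by
  by_contra hr
  have : IsEmpty (G.Walk u v) := not_nonempty_iff.mp hr
  exact h (by simp [gdist])

lemma exists_walk_gdist_eq [Finite V] (hw : ∀ x y, G.Adj x y → 0 ≤ w x y) {u v : V}
    (huv : G.Reachable u v) :
    ∃ p : G.Walk u v, ENNReal.ofReal (walkWeight w p) = gdist G w u v := by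
  classical
  have : Fintype V := Fintype.ofFinite V
  have : Finite {p : G.Walk u v // p.IsPath} :=
    Finite.of_injective (fun p => (⟨p.1, p.2.length_lt⟩ :
      {p : G.Walk u v // p.length < Fintype.card V})) fun a b hab => by
        cases a; cases b; simpa using hab
  obtain ⟨p⟩ := huv
  have : Nonempty {p : G.Walk u v // p.IsPath} := ⟨⟨p.bypass, p.bypass_isPath⟩⟩
  obtain ⟨q, hq⟩ := Finite.exists_min fun r : {p : G.Walk u v // p.IsPath} => walkWeight w r.1
  refine ⟨q.1, le_antisymm (le_iInf fun r => ENNReal.ofReal_le_ofReal ?_)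
    (gdist_le_walkWeight _)⟩
  exact (hq ⟨r.bypass, r.bypass_isPath⟩).trans (walkWeight_bypass_le hw r)

lemma hopDist_le_walkWeight {β : ℕ} {u v : V} (p : G.Walk u v) (hp : p.length ≤ β) :
    hopDist G w β u v ≤ ENNReal.ofReal (walkWeight w p) :=
  iInf₂_le (f := fun (q : G.Walk u v) (_ : q.length ≤ β) => ENNReal.ofReal (walkWeight w q))
    p hp

lemma hopDist_add_le (a b : ℕ) (u x v : V) :
    hopDist G w (a + b) u v ≤ hopDist G w a u x + hopDist G w b x v := by
  simp only [hopDist, ENNReal.iInf_add, ENNReal.add_iInf]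
  refine le_iInf₂ fun q hq => le_iInf₂ fun p hp => ?_
  calc hopDist G w (a + b) u v ≤ ENNReal.ofReal (walkWeight w (p.append q)) :=
        hopDist_le_walkWeight _ (by rw [Walk.length_append]; omega)
    _ ≤ _ := by rw [walkWeight_append]; exact ENNReal.ofReal_add_le

lemma hopDist_one_le {x y : V} (h : G.Adj x y) :
    hopDist G w 1 x y ≤ ENNReal.ofReal (w x y) := by
  simpa [walkWeight] using hopDist_le_walkWeight (w := w) (Walk.cons h Walk.nil) le_rfl

lemma hopDist_add_one_add_le_of_adj {m m' : V} (h : G.Adj m m') (a b : ℕ) (u v : V) :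
    hopDist G w (a + (1 + b)) u v ≤
      hopDist G w a u m + (ENNReal.ofReal (w m m') + hopDist G w b m' v) :=
  (hopDist_add_le a _ u m v).trans <| add_le_add_right
    ((hopDist_add_le 1 b m m' v).trans (add_le_add_left (hopDist_one_le h) _)) _

end Distances

theorem hop_doubling_general [Fintype V] (G G' : SimpleGraph V) (w w' : V → V → ℝ)
    (hsub : G ≤ G')
    (hwpos : ∀ x y, G.Adj x y → 0 < w x y)
    (hagree : ∀ x y, G.Adj x y → w' x y = w x y)
    (κ : ℤ) (β : ℕ) (ε : ℝ) (hε : 0 < ε)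
    (hsmall : ∀ u v : V, gdist G w u v ≤ ENNReal.ofReal ((2 : ℝ) ^ κ) →
      hopDist G' w' β u v ≤ ENNReal.ofReal (1 + ε) * gdist G w u v) :
    ∀ u v : V, ENNReal.ofReal ((2 : ℝ) ^ κ) < gdist G w u v →
      gdist G w u v ≤ ENNReal.ofReal ((2 : ℝ) ^ (κ + 1)) →
      hopDist G' w' (2 * β + 1) u v ≤ ENNReal.ofReal (1 + ε) * gdist G w u v := by
  intro u v hlo hhi
  have hw : ∀ x y, G.Adj x y → 0 ≤ w x y := fun x y h => (hwpos x y h).le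
  obtain ⟨p, hp⟩ := exists_walk_gdist_eq hw
    (reachable_of_gdist_ne_top (hhi.trans_lt ENNReal.ofReal_lt_top).ne)
  have hκ : (0 : ℝ) < 2 ^ κ := by positivity
  have hW_gt : 2 ^ κ < walkWeight w p := by
    rwa [← hp, ENNReal.ofReal_lt_ofReal_iff_of_nonneg hκ.le] at hlo
  have hW_le : walkWeight w p ≤ 2 * 2 ^ κ := by
    rwa [← hp, ENNReal.ofReal_le_ofReal_iff (by positivity), zpow_add_one₀ two_ne_zero,
      mul_comm] at hhi
  obtain ⟨m, m', hmm', p₁, p₂, hsum, h₁, h₂⟩ :=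
    exists_split_at_weight (w := w) p (walkWeight w p / 2) (by linarith) (by linarith)
  have hhop₁ := hsmall u m
    ((gdist_le_walkWeight p₁).trans (ENNReal.ofReal_le_ofReal (by linarith)))
  have hhop₂ := hsmall m' v
    ((gdist_le_walkWeight p₂).trans (ENNReal.ofReal_le_ofReal (by linarith)))
  have hc : 1 ≤ ENNReal.ofReal (1 + ε) := ENNReal.one_le_ofReal.mpr (by linarith)
  calc hopDist G' w' (2 * β + 1) u v
      ≤ hopDist G' w' β u m + (ENNReal.ofReal (w m m') + hopDist G' w' β m' v) := by
        rw [show 2 * β + 1 = β + (1 + β) by omega, ← hagree m m' hmm']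
        exact hopDist_add_one_add_le_of_adj (hsub hmm') β β u v
    _ ≤ ENNReal.ofReal (1 + ε) * (ENNReal.ofReal (walkWeight w p₁) +
          (ENNReal.ofReal (w m m') + ENNReal.ofReal (walkWeight w p₂))) := by
        rw [mul_add, mul_add]
        refine add_le_add (hhop₁.trans ?_)
          (add_le_add (le_mul_of_one_le_left' hc) (hhop₂.trans ?_)) <;>
          gcongr <;> exact gdist_le_walkWeight _
    _ = ENNReal.ofReal (1 + ε) * gdist G w u v := by
        have hw₂ := walkWeight_nonneg hw p₂
        rw [← ENNReal.ofReal_add (hw _ _ hmm') hw₂,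
          ← ENNReal.ofReal_add (walkWeight_nonneg hw p₁) (add_nonneg (hw _ _ hmm') hw₂),
          ← add_assoc, hsum, hp]

/-- If `G' ⊇ G` keeps `G`-weights, every `G'`-edge has weight at least the
`G`-distance of its endpoints, and every pair at `G`-distance at most `2^κ` admits a
`(1+ε)`-approximate path with at most `β` hops in `G'`, then every pair at `G`-distance in
`(2^κ, 2^{κ+1}]` admits a `(1+ε)`-approximate path with at most `2β+1` hops in `G'`. -/
theorem hop_doubling [Fintype V] (G G' : SimpleGraph V) (w w' : V → V → ℝ)
    (hconn : G.Connected)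
    (hsub : G ≤ G')
    (hwsymm : ∀ x y, w x y = w y x)
    (hwpos : ∀ x y, G.Adj x y → 0 < w x y)
    (hw'symm : ∀ x y, w' x y = w' y x)
    (hagree : ∀ x y, G.Adj x y → w' x y = w x y)
    (hw'ge : ∀ x y, G'.Adj x y → gdist G w x y ≤ ENNReal.ofReal (w' x y))
    (κ : ℤ) (β : ℕ) (hβ : 1 ≤ β) (ε : ℝ) (hε : 0 < ε)
    (hsmall : ∀ u v : V, gdist G w u v ≤ ENNReal.ofReal ((2 : ℝ) ^ κ) →
      hopDist G' w' β u v ≤ ENNReal.ofReal (1 + ε) * gdist G w u v) :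
    ∀ u v : V, ENNReal.ofReal ((2 : ℝ) ^ κ) < gdist G w u v →
      gdist G w u v ≤ ENNReal.ofReal ((2 : ℝ) ^ (κ + 1)) →
      hopDist G' w' (2 * β + 1) u v ≤ ENNReal.ofReal (1 + ε) * gdist G w u v :=
  hop_doubling_general G G' w w' hsub hwpos hagree κ β ε hε hsmall

end Stmt2
end

section
/- Let G = (V,E,w) be a weighted graph with positive edge weights, and let R > 0, ε₀ > 0 be reals and ℓ ≥ 1 an integer. Set η = ε₀·R/ℓ and define rounded weights ŵ(e) = ⌈w(e)/η⌉ for each edge e. Then for every walk π in G with at most ℓ edges: (a) if w(π) ≤ 2R, then ŵ(π) ≤ 2ℓ/ε₀ + ℓ; (b) w(π) ≤ η·ŵ(π) always, and if moreover w(π) ≥ R, then η·ŵ(π) ≤ (1+ε₀)·w(π). Here w(π) and ŵ(π) denote the sums over the edges of π (with multiplicity) of w, respectively ŵ. -/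
/-!
Rounding `w(e)/η` up to `⌈w(e)/η⌉` loses nothing from below and gains less than `1` per edge,
so `w(π) ≤ η·ŵ(π) ≤ w(π) + η·ℓ = w(π) + ε₀R`. Both parts follow: for (a) use `w(π) ≤ 2R`
and divide by `η`, for (b) use `ε₀R ≤ ε₀·w(π)`.
-/

namespace Stmt4

variable {V : Type*}

noncomputable def walkWeight (w : V → V → ℝ) {G : SimpleGraph V} {u v : V}
    (p : G.Walk u v) : ℝ :=
  (p.darts.map fun d => w d.toProd.1 d.toProd.2).sum

section WalkWeight

variable {G : SimpleGraph V} {u v : V}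

theorem walkWeight_mono {f g : V → V → ℝ} (hfg : ∀ x y, f x y ≤ g x y) (p : G.Walk u v) :
    walkWeight f p ≤ walkWeight g p :=
  List.sum_le_sum fun d _ => by simpa using hfg _ _

theorem walkWeight_const_mul (c : ℝ) (f : V → V → ℝ) (p : G.Walk u v) :
    walkWeight (fun x y => c * f x y) p = c * walkWeight f p :=
  List.sum_map_mul_left ..

theorem walkWeight_add_const (f : V → V → ℝ) (c : ℝ) (p : G.Walk u v) :
    walkWeight (fun x y => f x y + c) p = walkWeight f p + p.length * c := by
  simp [walkWeight, List.sum_map_add]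

end WalkWeight

theorem le_mul_ceil_div {η : ℝ} (hη : 0 < η) (t : ℝ) : t ≤ η * ⌈t / η⌉ := by
  rw [← div_le_iff₀' hη]
  exact Int.le_ceil _

theorem mul_ceil_div_le_add {η : ℝ} (hη : 0 < η) (t : ℝ) : η * ⌈t / η⌉ ≤ t + η := by
  rw [← le_div_iff₀' hη, add_div, div_self hη.ne']
  exact (Int.ceil_lt_add_one _).le

section Rounding

variable {G : SimpleGraph V} {u v : V} {η : ℝ}

theorem walkWeight_le_mul_walkWeight_ceil (hη : 0 < η) (w : V → V → ℝ) (p : G.Walk u v) :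
    walkWeight w p ≤ η * walkWeight (fun x y => (⌈w x y / η⌉ : ℝ)) p := by
  rw [← walkWeight_const_mul]
  exact walkWeight_mono (fun x y => le_mul_ceil_div hη _) p

theorem mul_walkWeight_ceil_le (hη : 0 < η) (w : V → V → ℝ) (p : G.Walk u v) :
    η * walkWeight (fun x y => (⌈w x y / η⌉ : ℝ)) p ≤ walkWeight w p + p.length * η := by
  rw [← walkWeight_const_mul, ← walkWeight_add_const]
  exact walkWeight_mono (fun x y => mul_ceil_div_le_add hη _) p

end Rounding

theorem rounding_scheme_general (G : SimpleGraph V) (w : V → V → ℝ)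
    (R ε₀ : ℝ) (hR : 0 < R) (hε₀ : 0 < ε₀)
    (ℓ : ℕ) (hℓ : 1 ≤ ℓ)
    (η : ℝ) (hη : η = ε₀ * R / ℓ)
    (wHat : V → V → ℝ) (hwHat : ∀ x y, wHat x y = (⌈w x y / η⌉ : ℤ))
    {u v : V} (π : G.Walk u v) (hlen : π.length ≤ ℓ) :
    (walkWeight w π ≤ 2 * R → walkWeight wHat π ≤ 2 * ℓ / ε₀ + ℓ) ∧
    walkWeight w π ≤ η * walkWeight wHat π ∧
    (R ≤ walkWeight w π → η * walkWeight wHat π ≤ (1 + ε₀) * walkWeight w π) := by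
  obtain rfl : wHat = fun x y => (⌈w x y / η⌉ : ℝ) := funext₂ hwHat
  have hℓpos : (0 : ℝ) < ℓ := by exact_mod_cast hℓ
  have hηpos : 0 < η := hη ▸ by positivity
  have hηℓ : η * ℓ = ε₀ * R := by rw [hη]; field_simp
  have hupper : η * walkWeight (fun x y => (⌈w x y / η⌉ : ℝ)) π ≤ walkWeight w π + ε₀ * R := by
    have hlenη : π.length * η ≤ ℓ * η := by gcongr
    linarith [mul_walkWeight_ceil_le hηpos w π]
  refine ⟨fun hshort => ?_, walkWeight_le_mul_walkWeight_ceil hηpos w π, fun hlong => ?_⟩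
  · have hbound : η * (2 * ℓ / ε₀ + ℓ) = 2 * R + ε₀ * R := by rw [hη]; field_simp
    rw [← mul_le_mul_iff_right₀ hηpos, hbound]
    linarith
  · linarith [mul_le_mul_of_nonneg_left hlong hε₀.le]

/-- Rounding scheme of Klein–Sairam: with `η = ε₀·R/ℓ` and
`wHat(e) = ⌈w(e)/η⌉`, every walk `π` with at most `ℓ` edges satisfies:
(a) if `w(π) ≤ 2R` then `wHat(π) ≤ 2ℓ/ε₀ + ℓ`;
(b) `w(π) ≤ η·wHat(π)`, and if moreover `R ≤ w(π)` then `η·wHat(π) ≤ (1+ε₀)·w(π)`. -/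
theorem rounding_scheme (G : SimpleGraph V) (w : V → V → ℝ)
    (hwsymm : ∀ x y, w x y = w y x)
    (hwpos : ∀ x y, G.Adj x y → 0 < w x y)
    (R ε₀ : ℝ) (hR : 0 < R) (hε₀ : 0 < ε₀)
    (ℓ : ℕ) (hℓ : 1 ≤ ℓ)
    (η : ℝ) (hη : η = ε₀ * R / ℓ)
    (wHat : V → V → ℝ) (hwHat : ∀ x y, wHat x y = (⌈w x y / η⌉ : ℤ))
    {u v : V} (π : G.Walk u v) (hlen : π.length ≤ ℓ) :
    (walkWeight w π ≤ 2 * R → walkWeight wHat π ≤ 2 * ℓ / ε₀ + ℓ) ∧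
    walkWeight w π ≤ η * walkWeight wHat π ∧
    (R ≤ walkWeight w π → η * walkWeight wHat π ≤ (1 + ε₀) * walkWeight w π) :=
  rounding_scheme_general G w R ε₀ hR hε₀ ℓ hℓ η hη wHat hwHat π hlen

end Stmt4
end

section
/- Let (V,d) be a pseudometric space, let r : V → ℝ be any function, let u ∈ V and ρ ≥ 0. For each v ∈ V set y_v = r(v) − d(u,v). Suppose there exists v* ∈ V such that y_{v*} > y_v + 2ρ for every v ∈ V with v ≠ v*. Then for every x ∈ V with d(u,x) ≤ ρ and every v ≠ v*, we have d(x,v*) − r(v*) < d(x,v) − r(v); in particular, v* is the unique minimizer of the function v ↦ d(x,v) − r(v) for every point x of the closed ball of radius ρ around u. -/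
/-- In a pseudometric space, if `v*` has shifted value
`y_{v*} = r(v*) − d(u,v*)` exceeding every other `y_v` by more than `2ρ`, then for every `x`
in the closed ball of radius `ρ` around `u` and every `v ≠ v*`,
`d(x,v*) − r(v*) < d(x,v) − r(v)`; in particular `v*` is the unique minimizer of
`v ↦ d(x,v) − r(v)` on the whole ball. -/
theorem shifted_gap_forces_ball {V : Type*} [PseudoMetricSpace V]
    (r : V → ℝ) (u : V) (ρ : ℝ) (hρ : 0 ≤ ρ)
    (vstar : V)
    (hgap : ∀ v : V, v ≠ vstar →
      (r v - dist u v) + 2 * ρ < r vstar - dist u vstar) :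
    ∀ x : V, dist u x ≤ ρ →
      ∀ v : V, v ≠ vstar →
        dist x vstar - r vstar < dist x v - r v := by
  intro x hx v hv
  have h1 : dist x vstar ≤ dist x u + dist u vstar := dist_triangle x u vstar
  have h2 : dist u v ≤ dist u x + dist x v := dist_triangle u x v
  have h3 := hgap v hv
  have h4 : dist x u = dist u x := dist_comm x u
  linarith
end

section
/- Let α > 0, δ > 0, let n ≥ 1 be an integer, let r₁, ..., r_n be independent random variables each exponentially distributed with rate α, and let d₁, ..., d_n be arbitrary real numbers. Set Y_i = r_i − d_i. Then the probability that there exists an index i such that Y_i ≥ Y_j + δ for all j ≠ i is at least e^{−δα}. Equivalently, the probability that the largest and the second-largest of the values Y₁, ..., Y_n lie within δ of each other is at most 1 − e^{−δα}. -/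
/-!
Write `c = e^{-δα}`, `Y_i = r_i - d_i`, `A_i` for the event that `Y_i` is a maximum and `E_i`
for the event that `Y_i` exceeds every other `Y_j` by at least `δ`. The `Exp(α)` density at
`x + δ` is at least `c` times the density at `x`, so the law of `r_i - δ` dominates `c` times the
law of `r_i`. Since `E_i` is `A_i` with `r_i` replaced by `r_i - δ`, and `r_i` is independent of
the other `r_j`, this gives `μ E_i ≥ c μ A_i`. The `A_i` cover the sample space and, as `δ > 0`,
the `E_i` are disjoint, so `μ (⋃ E_i) ≥ c ∑ μ A_i ≥ c`.
-/
open MeasureTheory ProbabilityTheory Set Real Function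
open scoped ENNReal

theorem ProbabilityTheory.ofReal_exp_mul_exponentialPDF_le (α : ℝ) {δ : ℝ} (hδ : 0 ≤ δ)
    (x : ℝ) :
    ENNReal.ofReal (exp (-δ * α)) * exponentialPDF α x ≤ exponentialPDF α (x + δ) := by
  rcases lt_or_ge x 0 with hx | hx
  · simp [exponentialPDF_of_neg hx]
  · rw [exponentialPDF_of_nonneg hx, exponentialPDF_of_nonneg (by linarith),
      ← ENNReal.ofReal_mul (exp_pos _).le]
    refine le_of_eq (congrArg ENNReal.ofReal ?_)
    rw [mul_left_comm, ← exp_add]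
    ring_nf

theorem ProbabilityTheory.smul_expMeasure_le_map_sub (α : ℝ) {δ : ℝ} (hδ : 0 ≤ δ) :
    ENNReal.ofReal (exp (-δ * α)) • expMeasure α ≤ (expMeasure α).map (· - δ) := by
  refine Measure.le_iff.2 fun s hs => ?_
  have hsub : Measurable fun x : ℝ => x - δ := measurable_sub_const δ
  have hpdf : Measurable (exponentialPDF α) :=
    (measurable_exponentialPDFReal α).ennreal_ofReal
  change _ * volume.withDensity (exponentialPDF α) s
    ≤ (volume.withDensity (exponentialPDF α)).map _ s
  rw [Measure.map_apply hsub hs, withDensity_apply _ hs, withDensity_apply _ (hsub hs),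
    ← (measurePreserving_add_right volume δ).setLIntegral_comp_preimage (hsub hs) hpdf]
  simp only [preimage_preimage, add_sub_cancel_right, preimage_id']
  rw [← lintegral_const_mul' _ _ ENNReal.ofReal_ne_top]
  exact setLIntegral_mono' hs fun x _ => ofReal_exp_mul_exponentialPDF_le α hδ x

theorem ProbabilityTheory.IndepFun.smul_map_prodMk_le {Ω α β : Type*}
    [MeasurableSpace Ω] [MeasurableSpace α] [MeasurableSpace β]
    {μ : Measure Ω} [IsFiniteMeasure μ]
    {X : Ω → α} {Z : Ω → β} (hX : Measurable X) (hZ : Measurable Z) (hXZ : IndepFun X Z μ)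
    {f : α → α} (hf : Measurable f) {c : ℝ≥0∞} (hc : c • μ.map X ≤ (μ.map X).map f) :
    c • μ.map (fun ω => (X ω, Z ω)) ≤ μ.map (fun ω => (f (X ω), Z ω)) := by
  have hfXZ : IndepFun (f ∘ X) Z μ := hXZ.comp hf measurable_id
  rw [hXZ.map_prod_eq_prod_map_map hX.aemeasurable hZ.aemeasurable,
    show (fun ω => (f (X ω), Z ω)) = fun ω => ((f ∘ X) ω, Z ω) from rfl,
    hfXZ.map_prod_eq_prod_map_map (hf.comp hX).aemeasurable hZ.aemeasurable,
    ← Measure.map_map hf hX, ← Measure.prod_smul_left]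
  exact Measure.prod_mono hc le_rfl

theorem ProbabilityTheory.iIndepFun.mul_measure_isMax_le_measure_gap {Ω ι : Type*}
    [MeasurableSpace Ω] {μ : Measure Ω} [IsFiniteMeasure μ] [Fintype ι] [DecidableEq ι]
    {r : ι → Ω → ℝ} (hmeas : ∀ i, Measurable (r i)) (hindep : iIndepFun r μ)
    {δ : ℝ} {c : ℝ≥0∞} (d : ι → ℝ) (i : ι)
    (hc : c • μ.map (r i) ≤ (μ.map (r i)).map (· - δ)) :
    c * μ {ω | ∀ j, j ≠ i → r j ω - d j ≤ r i ω - d i} ≤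
      μ {ω | ∀ j, j ≠ i → r j ω - d j + δ ≤ r i ω - d i} := by
  let others : Ω → ({i}ᶜ : Finset ι) → ℝ := fun ω j => r j ω
  have hothers : Measurable others := measurable_pi_lambda _ fun j => hmeas j
  have hindep_i : IndepFun (r i) others μ :=
    (hindep.indepFun_finset {i} {i}ᶜ disjoint_compl_right hmeas).comp
      (measurable_pi_apply (⟨i, Finset.mem_singleton_self i⟩ : ({i} : Finset ι))) measurable_id
  let S : Set (ℝ × (({i}ᶜ : Finset ι) → ℝ)) := {p | ∀ j, p.2 j - d j ≤ p.1 - d i}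
  have hS : MeasurableSet S := by
    simp only [S, ofPred_forall]
    exact .iInter fun j => measurableSet_le (by fun_prop) (by fun_prop)
  have hA : {ω | ∀ j, j ≠ i → r j ω - d j ≤ r i ω - d i} =
      (fun ω => (r i ω, others ω)) ⁻¹' S := by
    ext ω; simp [S, others]
  have hE : {ω | ∀ j, j ≠ i → r j ω - d j + δ ≤ r i ω - d i} =
      (fun ω => (r i ω - δ, others ω)) ⁻¹' S := by
    ext ω; simp [S, others, le_sub_iff_add_le, add_right_comm _ δ]
  rw [hA, hE, ← Measure.map_apply ((hmeas i).prodMk hothers) hS,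
    ← Measure.map_apply (((hmeas i).sub_const δ).prodMk hothers) hS]
  exact hindep_i.smul_map_prodMk_le (hmeas i) hothers (measurable_sub_const δ) hc S

theorem MeasureTheory.le_measure_iUnion_of_mul_le {Ω ι : Type*} [MeasurableSpace Ω]
    {μ : Measure Ω} [IsProbabilityMeasure μ] [Fintype ι] {A E : ι → Set Ω} {c : ℝ≥0∞}
    (hA : ⋃ i, A i = univ) (hE : Pairwise (Disjoint on E)) (hEm : ∀ i, MeasurableSet (E i))
    (h : ∀ i, c * μ (A i) ≤ μ (E i)) :
    c ≤ μ (⋃ i, E i) :=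
  calc c = c * μ (⋃ i, A i) := by rw [hA, measure_univ, mul_one]
    _ ≤ c * ∑ i, μ (A i) := by gcongr; exact measure_iUnion_fintype_le μ A
    _ = ∑ i, c * μ (A i) := Finset.mul_sum _ _ _
    _ ≤ ∑ i, μ (E i) := Finset.sum_le_sum fun i _ => h i
    _ = μ (⋃ i, E i) := by rw [measure_iUnion hE hEm, tsum_fintype]

theorem exp_shift_gap_probability_general
    {Ω : Type*} [MeasurableSpace Ω] (μ : Measure Ω) [IsProbabilityMeasure μ]
    (α δ : ℝ) (hδ : 0 < δ)
    (n : ℕ) (hn : 1 ≤ n)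
    (r : Fin n → Ω → ℝ)
    (hmeas : ∀ i, Measurable (r i))
    (hindep : iIndepFun r μ)
    (hdist : ∀ i, Measure.map (r i) μ = expMeasure α)
    (d : Fin n → ℝ) :
    ENNReal.ofReal (Real.exp (-δ * α)) ≤
      μ {ω | ∃ i : Fin n, ∀ j : Fin n, j ≠ i →
        (r j ω - d j) + δ ≤ r i ω - d i} := by
  have : Nonempty (Fin n) := ⟨⟨0, hn⟩⟩
  rw [ofPred_exists]
  refine le_measure_iUnion_of_mul_le
    (A := fun i => {ω | ∀ j, j ≠ i → r j ω - d j ≤ r i ω - d i}) ?_ ?_ ?_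
    fun i => hindep.mul_measure_isMax_le_measure_gap hmeas d i ?_
  · refine eq_univ_of_forall fun ω => mem_iUnion.2 ?_
    obtain ⟨i, hi⟩ := Finite.exists_max fun j => r j ω - d j
    exact ⟨i, fun j _ => hi j⟩
  · intro i i' hii'
    exact disjoint_left.2 fun ω hi hi' => by linarith [hi i' hii'.symm, hi' i hii']
  · intro i
    simp only [ofPred_forall]
    exact .iInter fun j => .iInter fun _ => measurableSet_le (by fun_prop) (by fun_prop)
  · rw [hdist i]
    exact smul_expMeasure_le_map_sub α hδ.le

/-- For independent `Exp(α)` random variables `r₁, …, r_n` and arbitrary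
reals `d₁, …, d_n`, setting `Y_i = r_i − d_i`, the probability that some `Y_i` exceeds all
other `Y_j` by at least `δ` is at least `e^{−δα}`. -/
theorem exp_shift_gap_probability
    {Ω : Type*} [MeasurableSpace Ω] (μ : Measure Ω) [IsProbabilityMeasure μ]
    (α δ : ℝ) (hα : 0 < α) (hδ : 0 < δ)
    (n : ℕ) (hn : 1 ≤ n)
    (r : Fin n → Ω → ℝ)
    (hmeas : ∀ i, Measurable (r i))
    (hindep : iIndepFun r μ)
    (hdist : ∀ i, Measure.map (r i) μ = expMeasure α)
    (d : Fin n → ℝ) :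
    ENNReal.ofReal (Real.exp (-δ * α)) ≤
      μ {ω | ∃ i : Fin n, ∀ j : Fin n, j ≠ i →
        (r j ω - d j) + δ ≤ r i ω - d i} :=
  exp_shift_gap_probability_general μ α δ hδ n hn r hmeas hindep hdist d
end

section
/- Let (V,d) be a finite pseudometric space, let α > 0, ρ ≥ 0, and u ∈ V. Let (r_v)_{v ∈ V} be independent random variables, each exponentially distributed with rate α. Then with probability at least e^{−2ρα} there exists v* ∈ V such that for every x ∈ V with d(u,x) ≤ ρ, the point v* is the unique minimizer over v ∈ V of d(x,v) − r_v. In other words, with probability at least e^{−2ρα} the entire closed ball of radius ρ around u is contained in a single cluster of the shifted-distance clustering that assigns each x to the minimizer of d(x,v) − r_v. -/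
/-!
Write `Y_v = r_v - d(u, v)`. If some `v` beats every other `w` by a margin `2ρ`, i.e.
`Y_w + 2ρ < Y_v`, then the triangle inequality makes `v` the unique minimiser of
`w ↦ d(x, w) - r_w` for every `x` in the ball. Conditioning on the shifts `r_w`, `w ≠ v`,
the event "`v` wins by `2ρ`" asks `r_v` to exceed a threshold `2ρ` higher than the event
"`v` wins", and since the density of `Exp(α)` satisfies `f(x + 2ρ) ≥ e^{-2αρ} f(x)`, the first
event has at least `e^{-2αρ}` times the probability of the second (ties are null, as `Exp(α)`
has no atoms). Summing over `v` finishes the proof: some `v` always wins weakly, while the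
events "`v` wins by `2ρ`" are disjoint.
-/

open MeasureTheory ProbabilityTheory
open scoped ENNReal

namespace ProbabilityTheory

instance nullSingletonClass_expMeasure (α : ℝ) : NullSingletonClass (expMeasure α) :=
  nullSingletonClass_withDensity _

lemma ofReal_exp_mul_exponentialPDF_le_s7 {α s : ℝ} (hs : 0 ≤ s) (x : ℝ) :
    ENNReal.ofReal (Real.exp (-(α * s))) * exponentialPDF α x ≤ exponentialPDF α (x + s) := by
  rcases lt_or_ge x 0 with hx | hx
  · simp [exponentialPDF_of_neg hx]
  rw [exponentialPDF_of_nonneg hx, exponentialPDF_of_nonneg (by linarith),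
    ← ENNReal.ofReal_mul (Real.exp_nonneg _)]
  refine le_of_eq (congrArg ENNReal.ofReal ?_)
  rw [mul_left_comm, ← Real.exp_add]
  ring_nf

lemma ofReal_exp_mul_expMeasure_le_expMeasure_preimage_sub {α s : ℝ} (hs : 0 ≤ s)
    (U : Set ℝ) :
    ENNReal.ofReal (Real.exp (-(α * s))) * expMeasure α U ≤
      expMeasure α ((· - s) ⁻¹' U) := by
  have hshift :=
    (measurePreserving_add_right (volume : Measure ℝ) s).setLIntegral_comp_preimage_emb
      (measurableEmbedding_addRight s) (exponentialPDF α) ((· - s) ⁻¹' U)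
  simp only [Set.preimage_preimage, add_sub_cancel_right, Set.preimage_id'] at hshift
  change _ * volume.withDensity (exponentialPDF α) U ≤ volume.withDensity (exponentialPDF α) _
  rw [withDensity_apply' _, withDensity_apply' _, ← hshift,
    ← lintegral_const_mul' _ _ ENNReal.ofReal_ne_top]
  exact lintegral_mono fun x => ofReal_exp_mul_exponentialPDF_le_s7 hs x

lemma measure_setOf_forall_le_le {ι : Type*} [Finite ι] (ν : Measure ℝ) [NullSingletonClass ν]
    (z : ι → ℝ) : ν {x | ∀ i, z i ≤ x} ≤ ν {x | ∀ i, z i < x} := by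
  have hsub : {x | ∀ i, z i ≤ x} ⊆ {x | ∀ i, z i < x} ∪ Set.range z := by
    intro x hx
    by_cases h : ∀ i, z i < x
    · exact Or.inl h
    · obtain ⟨i, hi⟩ := not_forall.mp h
      exact Or.inr ⟨i, le_antisymm (hx i) (not_lt.mp hi)⟩
  calc ν {x | ∀ i, z i ≤ x} ≤ ν ({x | ∀ i, z i < x} ∪ Set.range z) := measure_mono hsub
    _ ≤ ν {x | ∀ i, z i < x} + ν (Set.range z) := measure_union_le _ _
    _ = ν {x | ∀ i, z i < x} := by rw [(Set.finite_range z).measure_zero ν, add_zero]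

lemma ofReal_exp_mul_expMeasure_forall_le_le {ι : Type*} [Finite ι] {α s : ℝ} (hs : 0 ≤ s)
    (z : ι → ℝ) :
    ENNReal.ofReal (Real.exp (-(α * s))) * expMeasure α {x | ∀ i, z i ≤ x} ≤
      expMeasure α {x | ∀ i, z i + s < x} := by
  calc _ ≤ ENNReal.ofReal (Real.exp (-(α * s))) * expMeasure α {x | ∀ i, z i < x} :=
        mul_le_mul_right (measure_setOf_forall_le_le (expMeasure α) z) _
    _ ≤ expMeasure α ((· - s) ⁻¹' {x | ∀ i, z i < x}) :=
        ofReal_exp_mul_expMeasure_le_expMeasure_preimage_sub hs _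
    _ = expMeasure α {x | ∀ i, z i + s < x} := by
        simp only [Set.preimage_ofPred_eq, lt_sub_iff_add_lt]

lemma IndepFun.measure_prodMk_mem {Ω β γ : Type*} [MeasurableSpace Ω] [MeasurableSpace β]
    [MeasurableSpace γ] {μ : Measure Ω} [IsFiniteMeasure μ] {Z : Ω → β} {X : Ω → γ}
    (hZ : Measurable Z) (hX : Measurable X) (hind : IndepFun Z X μ) {S : Set (β × γ)}
    (hS : MeasurableSet S) :
    μ {ω | (Z ω, X ω) ∈ S} = ∫⁻ z, μ.map X (Prod.mk z ⁻¹' S) ∂(μ.map Z) := by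
  rw [← Measure.prod_apply hS, ← hind.map_prod_eq_prod_map_map hZ.aemeasurable hX.aemeasurable,
    Measure.map_apply (hZ.prodMk hX) hS]
  rfl

lemma IndepFun.ofReal_exp_mul_measure_forall_le_le {Ω ι : Type*} [MeasurableSpace Ω] [Finite ι]
    {μ : Measure Ω} [IsFiniteMeasure μ] {α s : ℝ} (hs : 0 ≤ s) {Z : Ω → ι → ℝ}
    {X : Ω → ℝ} (hZ : Measurable Z) (hX : Measurable X) (hind : IndepFun Z X μ)
    (hXexp : μ.map X = expMeasure α) :
    ENNReal.ofReal (Real.exp (-(α * s))) * μ {ω | ∀ i, Z ω i ≤ X ω} ≤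
      μ {ω | ∀ i, Z ω i + s < X ω} := by
  have hle := hind.measure_prodMk_mem hZ hX (S := {p | ∀ i, p.1 i ≤ p.2})
    (by simp only [Set.ofPred_forall]
        exact MeasurableSet.iInter fun i => measurableSet_le (by fun_prop) (by fun_prop))
  have hlt := hind.measure_prodMk_mem hZ hX (S := {p | ∀ i, p.1 i + s < p.2})
    (by simp only [Set.ofPred_forall]
        exact MeasurableSet.iInter fun i => measurableSet_lt (by fun_prop) (by fun_prop))
  simp only [Set.mem_ofPred_eq] at hle hlt
  rw [hle, hlt, hXexp, ← lintegral_const_mul' _ _ ENNReal.ofReal_ne_top]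
  exact lintegral_mono fun z => ofReal_exp_mul_expMeasure_forall_le_le hs z

lemma iIndepFun.ofReal_exp_mul_measure_forall_sub_le_sub {Ω V : Type*} [MeasurableSpace Ω]
    [Fintype V] {μ : Measure Ω} [IsFiniteMeasure μ] {r : V → Ω → ℝ} {α s : ℝ} {v : V}
    (hindep : iIndepFun r μ) (hmeas : ∀ w, Measurable (r w)) (hv : μ.map (r v) = expMeasure α)
    (b : V → ℝ) (hs : 0 ≤ s) :
    ENNReal.ofReal (Real.exp (-(α * s))) *
        μ {ω | ∀ w, w ≠ v → r w ω - b w ≤ r v ω - b v} ≤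
      μ {ω | ∀ w, w ≠ v → r w ω - b w + s < r v ω - b v} := by
  classical
  let Z : Ω → (Finset.univ.erase v) → ℝ := fun ω w => r w ω - b w + b v
  have hZ : Measurable Z :=
    measurable_pi_lambda _ fun w => ((hmeas w).sub_const _).add_const _
  have hind : IndepFun Z (r v) μ :=
    (hindep.indepFun_finset _ {v} (by simp) hmeas).comp
      (measurable_pi_lambda _ fun w => ((measurable_pi_apply w).sub_const _).add_const _)
      (measurable_pi_apply ⟨v, Finset.mem_singleton_self v⟩)
  convert hind.ofReal_exp_mul_measure_forall_le_le hs hZ (hmeas v) hv using 3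
  all_goals
    ext ω
    simp only [Set.mem_ofPred_eq, Subtype.forall, Finset.mem_erase, Finset.mem_univ, and_true, Z]
    refine forall₂_congr fun w _ => ?_
    constructor <;> intro h <;> linarith

end ProbabilityTheory

section Leaders

variable {Ω V : Type*} {Y : V → Ω → ℝ} {s : ℝ}

lemma pairwise_disjoint_setOf_forall_add_lt (hs : 0 ≤ s) :
    Pairwise (Function.onFun Disjoint fun v => {ω | ∀ w, w ≠ v → Y w ω + s < Y v ω}) := by
  intro v w hvw
  refine Set.disjoint_left.mpr fun ω hv hw => ?_
  have := hv w hvw.symm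
  have := hw v hvw
  linarith

variable [MeasurableSpace Ω] {μ : Measure Ω}

lemma measurableSet_setOf_forall_add_lt [Countable V] (hY : ∀ v, Measurable (Y v)) (v : V) :
    MeasurableSet {ω | ∀ w, w ≠ v → Y w ω + s < Y v ω} := by
  simp only [Set.ofPred_forall]
  exact MeasurableSet.iInter fun w => MeasurableSet.iInter fun _ =>
    measurableSet_lt ((hY w).add_const s) (hY v)

lemma one_le_sum_measure_setOf_forall_le [Fintype V] [Nonempty V] [IsProbabilityMeasure μ] :
    1 ≤ ∑ v, μ {ω | ∀ w, w ≠ v → Y w ω ≤ Y v ω} := by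
  have hcover : ⋃ v, {ω | ∀ w, w ≠ v → Y w ω ≤ Y v ω} = Set.univ := by
    refine Set.eq_univ_of_forall fun ω => ?_
    obtain ⟨v, hv⟩ := Finite.exists_max fun v => Y v ω
    exact Set.mem_iUnion.mpr ⟨v, fun w _ => hv w⟩
  calc 1 = μ (⋃ v, {ω | ∀ w, w ≠ v → Y w ω ≤ Y v ω}) := by rw [hcover, measure_univ]
    _ ≤ _ := measure_iUnion_fintype_le _ _

lemma le_measure_exists_forall_add_lt [Fintype V] [Nonempty V] [IsProbabilityMeasure μ]
    (hY : ∀ v, Measurable (Y v)) (hs : 0 ≤ s) {c : ℝ≥0∞}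
    (hc : ∀ v, c * μ {ω | ∀ w, w ≠ v → Y w ω ≤ Y v ω} ≤
      μ {ω | ∀ w, w ≠ v → Y w ω + s < Y v ω}) :
    c ≤ μ {ω | ∃ v, ∀ w, w ≠ v → Y w ω + s < Y v ω} := by
  calc c = c * 1 := (mul_one c).symm
    _ ≤ c * ∑ v, μ {ω | ∀ w, w ≠ v → Y w ω ≤ Y v ω} :=
        mul_le_mul_right one_le_sum_measure_setOf_forall_le c
    _ = ∑ v, c * μ {ω | ∀ w, w ≠ v → Y w ω ≤ Y v ω} := Finset.mul_sum _ _ _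
    _ ≤ ∑ v, μ {ω | ∀ w, w ≠ v → Y w ω + s < Y v ω} :=
        Finset.sum_le_sum fun v _ => hc v
    _ = μ (⋃ v, {ω | ∀ w, w ≠ v → Y w ω + s < Y v ω}) := by
        rw [measure_iUnion (pairwise_disjoint_setOf_forall_add_lt hs)
          (measurableSet_setOf_forall_add_lt hY), tsum_fintype]
    _ = μ {ω | ∃ v, ∀ w, w ≠ v → Y w ω + s < Y v ω} := by rw [Set.ofPred_exists]

end Leaders

lemma dist_sub_lt_dist_sub_of_sub_dist_add_lt {V : Type*} [PseudoMetricSpace V] {u x v w : V}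
    {ρ a b : ℝ} (hx : dist u x ≤ ρ) (h : b - dist u w + 2 * ρ < a - dist u v) :
    dist x v - a < dist x w - b := by
  have := dist_triangle x u v
  have := dist_triangle u x w
  have := dist_comm x u
  linarith

theorem ldd_padding_property_general
    {V : Type*} [Fintype V] [PseudoMetricSpace V]
    {Ω : Type*} [MeasurableSpace Ω] (μ : Measure Ω) [IsProbabilityMeasure μ]
    (α : ℝ) (ρ : ℝ) (hρ : 0 ≤ ρ) (u : V)
    (r : V → Ω → ℝ)
    (hmeas : ∀ v, Measurable (r v))
    (hindep : iIndepFun r μ)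
    (hdist : ∀ v, Measure.map (r v) μ = expMeasure α) :
    ENNReal.ofReal (Real.exp (-2 * ρ * α)) ≤
      μ {ω | ∃ vstar : V, ∀ x : V, dist u x ≤ ρ →
        ∀ v : V, v ≠ vstar → dist x vstar - r vstar ω < dist x v - r v ω} := by
  have : Nonempty V := ⟨u⟩
  have hc : Real.exp (-2 * ρ * α) = Real.exp (-(α * (2 * ρ))) := by ring_nf
  calc ENNReal.ofReal (Real.exp (-2 * ρ * α))
      ≤ μ {ω | ∃ v, ∀ w, w ≠ v → r w ω - dist u w + 2 * ρ < r v ω - dist u v} := by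
        rw [hc]
        exact le_measure_exists_forall_add_lt (Y := fun w ω => r w ω - dist u w)
          (fun w => (hmeas w).sub_const _) (by positivity) fun v =>
            hindep.ofReal_exp_mul_measure_forall_sub_le_sub hmeas (hdist v) _ (by positivity)
    _ ≤ _ := by
        refine measure_mono fun ω ⟨v, hv⟩ => ⟨v, fun x hx w hw => ?_⟩
        exact dist_sub_lt_dist_sub_of_sub_dist_add_lt hx (hv w hw)

/-- **padding property of LDD(α).** In a finite pseudometric space, with
independent `Exp(α)` shifts `r_v`, with probability at least `e^{−2ρα}` there is a single
`v*` that is the unique minimizer of `v ↦ d(x,v) − r_v` simultaneously for every `x` in the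
closed ball of radius `ρ` around `u`; i.e., the whole ball lies in the cluster of `v*`. -/
theorem ldd_padding_property
    {V : Type*} [Fintype V] [PseudoMetricSpace V]
    {Ω : Type*} [MeasurableSpace Ω] (μ : Measure Ω) [IsProbabilityMeasure μ]
    (α : ℝ) (hα : 0 < α) (ρ : ℝ) (hρ : 0 ≤ ρ) (u : V)
    (r : V → Ω → ℝ)
    (hmeas : ∀ v, Measurable (r v))
    (hindep : iIndepFun r μ)
    (hdist : ∀ v, Measure.map (r v) μ = expMeasure α) :
    ENNReal.ofReal (Real.exp (-2 * ρ * α)) ≤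
      μ {ω | ∃ vstar : V, ∀ x : V, dist u x ≤ ρ →
        ∀ v : V, v ≠ vstar → dist x vstar - r vstar ω < dist x v - r v ω} :=
  ldd_padding_property_general μ α ρ hρ u r hmeas hindep hdist
end
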